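/- arXiv:2102.01186 — 2 statements merged into one kernel-verified Lean document; each statement's English description precedes it below -/
import Mathlib

section
/- Fix β ∈ (0,1). The function f(τ) := log(τ)·(1 − β^{1/log(τβ)}), defined for τ large enough that τβ > 1, satisfies lim_{τ→∞} f(τ) = |log β|, and f(τ) ≥ |log β| for all τ in its domain (f is decreasing to this limit). -/
open Real Filter

lemma aux_bounds (b L : ℝ) (hb : b < 0) (hL : 0 < L) :
    -b ≤ (L - b) * (1 - Real.exp (b / L)) ∧
      (L - b) * (1 - Real.exp (b / L)) ≤ -b + b ^ 2 / L := by
  have he : (0:ℝ) < Real.exp (b / L) := Real.exp_pos _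
  have h1 : 1 + -(b / L) ≤ Real.exp (-(b / L)) := by have := Real.add_one_le_exp (-(b / L)); linarith
  rw [Real.exp_neg] at h1
  have hinv : Real.exp (b / L) * (Real.exp (b / L))⁻¹ = 1 := mul_inv_cancel₀ he.ne'
  have h2 : 1 + b / L ≤ Real.exp (b / L) := by have := Real.add_one_le_exp (b / L); linarith
  have hLb : 0 < L - b := by linarith
  constructor
  · -- (L-b) * exp(b/L) ≤ L
    have h3 : Real.exp (b / L) * (1 - b / L) ≤ 1 := by
      nlinarith [mul_le_mul_of_nonneg_left h1 he.le]
    have h4 : Real.exp (b / L) * (L - b) ≤ L := by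
      have := mul_le_mul_of_nonneg_right h3 hL.le
      have hfield : Real.exp (b / L) * (1 - b / L) * L = Real.exp (b / L) * (L - b) := by
        field_simp
      linarith [hfield ▸ this]
    nlinarith
  · have h5 : 1 - Real.exp (b / L) ≤ -(b / L) := by linarith
    have h6 : (L - b) * (1 - Real.exp (b / L)) ≤ (L - b) * (-(b / L)) :=
      mul_le_mul_of_nonneg_left h5 hLb.le
    have hfield : (L - b) * (-(b / L)) = -b + b ^ 2 / L := by
      field_simp; ring
    linarith [hfield ▸ h6]

theorem limit_and_lower_bound (β : ℝ) (hβ0 : 0 < β) (hβ1 : β < 1) :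
    Filter.Tendsto (fun τ : ℝ => Real.log τ * (1 - β ^ (1 / Real.log (τ * β))))
      Filter.atTop (nhds |Real.log β|) ∧
    ∀ τ : ℝ, 1 < τ * β →
      |Real.log β| ≤ Real.log τ * (1 - β ^ (1 / Real.log (τ * β))) := by
  set b := Real.log β with hbdef
  have hb : b < 0 := Real.log_neg hβ0 hβ1
  have habs : |b| = -b := abs_of_neg hb
  -- rewrite f in terms of L = log (τ β)
  have key : ∀ τ : ℝ, 1 < τ * β →
      Real.log τ * (1 - β ^ (1 / Real.log (τ * β)))
        = (Real.log (τ * β) - b) * (1 - Real.exp (b / Real.log (τ * β))) := by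
    intro τ hτ
    have hτ0 : 0 < τ := by nlinarith
    have hlog : Real.log (τ * β) = Real.log τ + b := Real.log_mul hτ0.ne' hβ0.ne'
    have hrpow : β ^ (1 / Real.log (τ * β)) = Real.exp (b / Real.log (τ * β)) := by
      rw [Real.rpow_def_of_pos hβ0]
      ring_nf
      congr 1; rw [hbdef]; ring
    rw [hrpow, hlog]
    ring
  have hLpos : ∀ τ : ℝ, 1 < τ * β → 0 < Real.log (τ * β) := fun τ hτ => Real.log_pos hτ
  constructor
  · -- the limit
    have htend : Tendsto (fun τ : ℝ => Real.log (τ * β)) atTop atTop :=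
      Real.tendsto_log_atTop.comp (Tendsto.atTop_mul_const hβ0 tendsto_id)
    have hev : ∀ᶠ τ : ℝ in atTop, 1 < τ * β := by
      have := (Tendsto.atTop_mul_const hβ0 (tendsto_id (α := ℝ))).eventually_gt_atTop 1
      simpa using this
    have hupper : Tendsto (fun τ : ℝ => -b + b ^ 2 / Real.log (τ * β)) atTop (nhds (-b)) := by
      have : Tendsto (fun τ : ℝ => b ^ 2 / Real.log (τ * β)) atTop (nhds 0) :=
        Tendsto.div_atTop tendsto_const_nhds htend
      simpa using tendsto_const_nhds.add this
    rw [habs]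
    apply tendsto_of_tendsto_of_tendsto_of_le_of_le' tendsto_const_nhds hupper
    · filter_upwards [hev] with τ hτ
      rw [key τ hτ]
      exact (aux_bounds b _ hb (hLpos τ hτ)).1
    · filter_upwards [hev] with τ hτ
      rw [key τ hτ]
      exact (aux_bounds b _ hb (hLpos τ hτ)).2
  · intro τ hτ
    rw [habs, key τ hτ]
    exact (aux_bounds b _ hb (hLpos τ hτ)).1
end

section
/- Countable intersection property of winning sets: let J be a countable index set, c > 0, and for each j ∈ J let S_j ⊆ ℝ^d be an (α_j, β, c, ρ)-winning set for the game. If Σ_{j∈J} α_j^c converges and α := (Σ_{j∈J} α_j^c)^{1/c}, then S := ⋂_{j∈J} S_j is (α, β, c, ρ)-winning. -/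
open Metric Set Filter Topology


private lemma key_rpow {c : ℝ} (hc : 0 < c) (x : ℝ) {t : ℝ} (ht : 0 ≤ t) :
    (t * x) ^ c = (t * |x|) ^ c * (if 0 ≤ x then 1 else Real.cos (c * Real.pi)) := by
  by_cases hx : 0 ≤ x
  · simp [hx, abs_of_nonneg hx]
  · push_neg at hx
    rw [if_neg (not_le.mpr hx)]
    rcases eq_or_lt_of_le ht with h | h
    · simp [← h, Real.zero_rpow hc.ne']
    · have h1 : t * x < 0 := mul_neg_of_pos_of_neg h hx
      have h2 : 0 < t * |x| := mul_pos h (abs_pos.mpr hx.ne)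
      rw [Real.rpow_def_of_neg h1, Real.rpow_def_of_pos h2]
      have : Real.log (t * x) = Real.log (t * |x|) := by
        rw [abs_of_neg hx, show t * -x = -(t * x) by ring, Real.log_neg_eq_log]
      rw [this]

private lemma key_tsum {J : Type*} {c : ℝ} (hc : 0 < c) (α : J → ℝ) (hα : ∀ j, 0 ≤ α j)
    (x : ℝ) :
    ∑' j, (α j * x) ^ c = ((∑' j, α j ^ c) ^ (1 / c) * x) ^ c := by
  set A := ∑' j, α j ^ c with hA
  have hA0 : 0 ≤ A := tsum_nonneg fun j => Real.rpow_nonneg (hα j) c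
  have hcpow : (A ^ (1 / c)) ^ c = A := by
    rw [one_div, Real.rpow_inv_rpow hA0 hc.ne']
  have hAt : 0 ≤ A ^ (1 / c) := Real.rpow_nonneg hA0 _
  set K := if 0 ≤ x then 1 else Real.cos (c * Real.pi) with hK
  calc ∑' j, (α j * x) ^ c = ∑' j, α j ^ c * (|x| ^ c * K) := by
        refine tsum_congr fun j => ?_
        rw [key_rpow hc x (hα j), Real.mul_rpow (hα j) (abs_nonneg x), mul_assoc]
    _ = A * (|x| ^ c * K) := tsum_mul_right
    _ = (A ^ (1 / c) * x) ^ c := by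
        rw [key_rpow hc x hAt, Real.mul_rpow hAt (abs_nonneg x), hcpow, mul_assoc]

/-- A play by Bob in the `(α, β, c, ρ)`-game in `ℝ^d`: nested closed balls with radii
`ρ₀ ≥ ρ`, `ρ_{m+1} ≥ β·ρ_m`, tending to `0`. -/
structure BobPlay (d : ℕ) (β ρ : ℝ) where
  x : ℕ → EuclideanSpace ℝ (Fin d)
  r : ℕ → ℝ
  r0 : ρ ≤ r 0
  rβ : ∀ m, β * r m ≤ r (m + 1)
  nested : ∀ m, closedBall (x (m + 1)) (r (m + 1)) ⊆ closedBall (x m) (r m)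
  rlim : Tendsto r atTop (𝓝 0)

/-- A strategy for Alice: from the history of Bob's balls played so far, produce a
countable collection of open sets to erase. -/
def Strategy (d : ℕ) : Type :=
  List (EuclideanSpace ℝ (Fin d) × ℝ) → ℕ → Set (EuclideanSpace ℝ (Fin d))

/-- Alice's strategy is legal for parameters `α, c`: the erased sets are open and,
if `c > 0`, satisfy `Σ_i diam(A_i)^c ≤ (α·r_m)^c`; if `c = 0` she erases a single
set of diameter at most `α·r_m`. -/
def Legal {d : ℕ} (α c : ℝ) (σ : Strategy d) : Prop :=
  ∀ (h : List (EuclideanSpace ℝ (Fin d) × ℝ)) (p : EuclideanSpace ℝ (Fin d) × ℝ),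
    (∀ i, IsOpen (σ (h ++ [p]) i)) ∧
    (if c = 0 then
        diam (σ (h ++ [p]) 0) ≤ α * p.2 ∧ ∀ i, i ≠ 0 → σ (h ++ [p]) i = ∅
      else ∑' i, diam (σ (h ++ [p]) i) ^ c ≤ (α * p.2) ^ c)

/-- The history of Bob's balls up to and including turn `m`. -/
def BobPlay.hist {d : ℕ} {β ρ : ℝ} (B : BobPlay d β ρ) (m : ℕ) :
    List (EuclideanSpace ℝ (Fin d) × ℝ) :=
  (List.range (m + 1)).map fun k => (B.x k, B.r k)

/-- `S` is an `(α, β, c, ρ)`-winning set: Alice has a legal strategy guaranteeing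
that whenever the outcome `x_∞ = ⋂_m B_m` avoids all erased sets, it lies in `S`. -/
def WinningSet {d : ℕ} (α β c ρ : ℝ) (S : Set (EuclideanSpace ℝ (Fin d))) : Prop :=
  ∃ σ : Strategy d, Legal α c σ ∧
    ∀ (B : BobPlay d β ρ) (z : EuclideanSpace ℝ (Fin d)),
      (∀ m, z ∈ closedBall (B.x m) (B.r m)) →
      (∀ m i, z ∉ σ (B.hist m) i) → z ∈ S

theorem countable_intersection_winning {d : ℕ} (J : Type*) [Countable J]
    (β c ρ : ℝ) (hc : 0 < c) (α : J → ℝ) (hα : ∀ j, 0 ≤ α j)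
    (S : J → Set (EuclideanSpace ℝ (Fin d)))
    (hwin : ∀ j, WinningSet (α j) β c ρ (S j))
    (hsum : Summable fun j => α j ^ c) :
    WinningSet ((∑' j, α j ^ c) ^ (1 / c)) β c ρ (⋂ j, S j) := by
  classical
  choose σs hleg hwin' using hwin
  obtain ⟨ι, hι⟩ := exists_injective_nat (J × ℕ)
  set σ : Strategy d := fun h n =>
    (Function.partialInv ι n).elim ∅ (fun q => σs q.1 h q.2) with hσ
  have hval : ∀ (q : J × ℕ) h, σ h (ι q) = σs q.1 h q.2 := by
    intro q h
    simp [hσ, Function.partialInv_left hι q]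
  refine ⟨σ, ?_, ?_⟩
  · -- legality
    intro h p
    constructor
    · intro n
      rcases hopt : Function.partialInv ι n with _ | q
      · simp [hσ, hopt]
      · simpa [hσ, hopt] using (hleg q.1 h p).1 q.2
    · rw [if_neg hc.ne']
      set x := p.2 with hx
      set D : J × ℕ → ℝ := fun q => diam (σs q.1 (h ++ [p]) q.2) ^ c with hD
      set g : J → ℝ := fun j => (α j * x) ^ c with hg
      have hDg : ∀ j, ∑' i, D (j, i) ≤ g j := by
        intro j
        have := (hleg j h p).2
        rwa [if_neg hc.ne'] at this
      have hD0 : ∀ q, 0 ≤ D q := fun q => Real.rpow_nonneg diam_nonneg c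
      have hg0 : ∀ j, 0 ≤ g j := fun j =>
        le_trans (tsum_nonneg fun i => hD0 (j, i)) (hDg j)
      have hgsum : Summable g := by
        have : g = fun j => α j ^ c * (|x| ^ c * (if 0 ≤ x then 1 else Real.cos (c * Real.pi))) := by
          funext j
          show (α j * x) ^ c = _
          rw [key_rpow hc x (hα j), Real.mul_rpow (hα j) (abs_nonneg x), mul_assoc]
        rw [this]
        exact hsum.mul_right _
      have hM : ∑' j, g j = ((∑' j, α j ^ c) ^ (1 / c) * x) ^ c := key_tsum hc α hα x
      set F : ℕ → ℝ := fun n => diam (σ (h ++ [p]) n) ^ c with hF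
      have hFι : ∀ q, F (ι q) = D q := fun q => by
        show diam (σ (h ++ [p]) (ι q)) ^ c = diam (σs q.1 (h ++ [p]) q.2) ^ c
        rw [hval]
      show ∑' n, F n ≤ _
      rw [← hM]
      by_cases hFs : Summable F
      · have hsupp : Function.support F ⊆ Set.range ι := by
          intro n hn
          rcases hopt : Function.partialInv ι n with _ | q
          · exfalso
            apply hn
            simp [hF, hσ, hopt, Real.zero_rpow hc.ne']
          · exact ⟨q, (Function.partialInv_of_injective hι q n).mp hopt⟩
        have h1 : ∑' q, F (ι q) = ∑' n, F n := hι.tsum_eq hsupp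
        have hDsum : Summable D := by
          have hcomp : F ∘ ι = D := funext hFι
          rw [← hcomp]
          exact hFs.comp_injective hι
        have h2 : ∑' q, D q = ∑' j, ∑' i, D (j, i) := Summable.tsum_prod hDsum
        have h3 : Summable fun j => ∑' i, D (j, i) :=
          Summable.of_nonneg_of_le (fun j => tsum_nonneg fun i => hD0 (j, i)) hDg hgsum
        calc ∑' n, F n = ∑' q, D q := by rw [← h1]; exact tsum_congr hFι
          _ = ∑' j, ∑' i, D (j, i) := h2
          _ ≤ ∑' j, g j := Summable.tsum_le_tsum hDg h3 hgsum
      · rw [tsum_eq_zero_of_not_summable hFs]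
        exact tsum_nonneg hg0
  · -- winning
    intro B z hball havoid
    refine mem_iInter.mpr fun j => ?_
    refine hwin' j B z hball fun m i => ?_
    have := havoid m (ι (j, i))
    rwa [hval (j, i)] at this
end
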